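/- For all real x, the Student's t CDF satisfies F_n(x) = 1/2 + (x/(√n·B(1/2,n/2)))·₂F₁(1/2, (n+1)/2; 3/2; −x²/n), where ₂F₁ is the Gauss hypergeometric function. -/

import Mathlib

open Real MeasureTheory

noncomputable def betaFn (p q : ℝ) : ℝ := Real.Gamma p * Real.Gamma q / Real.Gamma (p + q)

noncomputable def studentDensity (n t : ℝ) : ℝ :=
  (1 / (Real.sqrt n * betaFn (1/2) (n/2))) * (1 + t^2 / n) ^ (-(n+1)/2 : ℝ)

noncomputable def studentCDF (n x : ℝ) : ℝ := ∫ t in Set.Iic x, studentDensity n t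

/-- The Gauss hypergeometric function `₂F₁(a,b;c;z)` defined by Euler's integral
representation with respect to the first parameter,
`₂F₁(a,b;c;z) = (1/B(a,c-a)) ∫₀¹ t^{a-1}(1-t)^{c-a-1}(1-zt)^{-b} dt`
(valid and giving the analytic continuation for `c > a > 0` and `z < 1`;
recall `₂F₁` is symmetric in `a` and `b`). -/
noncomputable def hyp2F1 (a b c z : ℝ) : ℝ :=
  (1 / betaFn a (c - a)) *
    ∫ t in (0:ℝ)..1, t ^ (a-1 : ℝ) * (1-t) ^ (c-a-1 : ℝ) * (1 - z*t) ^ (-b : ℝ)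

lemma betaFn_pos {p q : ℝ} (hp : 0 < p) (hq : 0 < q) : 0 < betaFn p q := by
  unfold betaFn
  have := Real.Gamma_pos_of_pos hp
  have := Real.Gamma_pos_of_pos hq
  have := Real.Gamma_pos_of_pos (add_pos hp hq)
  positivity

lemma complexBeta_ofReal {p q : ℝ} (hp : 0 < p) (hq : 0 < q) :
    Complex.betaIntegral p q = ((betaFn p q : ℝ) : ℂ) := by
  have h := Complex.Gamma_mul_Gamma_eq_betaIntegral (s := (p:ℂ)) (t := (q:ℂ))
    (by simpa using hp) (by simpa using hq)
  have hne : Complex.Gamma ((p:ℂ) + q) ≠ 0 :=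
    Complex.Gamma_ne_zero_of_re_pos (by simpa using add_pos hp hq)
  have hg : ((p:ℂ) + q) = ((p + q : ℝ) : ℂ) := by push_cast; ring
  rw [betaFn]
  push_cast
  rw [hg] at h hne
  rw [← Complex.Gamma_ofReal, ← Complex.Gamma_ofReal, ← Complex.Gamma_ofReal, eq_div_iff hne]
  linear_combination -h

lemma complexBeta_eq_real (p q : ℝ) :
    Complex.betaIntegral p q
      = ((∫ t in (0:ℝ)..1, t ^ (p-1) * (1-t) ^ (q-1) : ℝ) : ℂ) := by
  rw [Complex.betaIntegral, ← intervalIntegral.integral_ofReal]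
  apply intervalIntegral.integral_congr
  intro y hy
  rw [Set.uIcc_of_le (by norm_num : (0:ℝ) ≤ 1)] at hy
  push_cast
  rw [show ((p:ℂ)-1) = ((p-1:ℝ):ℂ) by push_cast; ring,
      show ((q:ℂ)-1) = ((q-1:ℝ):ℂ) by push_cast; ring,
      show ((1:ℂ) - (y:ℂ)) = ((1-y:ℝ):ℂ) by push_cast; ring,
      ← Complex.ofReal_cpow hy.1, ← Complex.ofReal_cpow (by linarith [hy.2] : (0:ℝ) ≤ 1 - y)]

lemma realBeta {p q : ℝ} (hp : 0 < p) (hq : 0 < q) :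
    ∫ t in (0:ℝ)..1, t ^ (p-1) * (1-t) ^ (q-1) = betaFn p q := by
  have := (complexBeta_eq_real p q).symm.trans (complexBeta_ofReal hp hq)
  exact_mod_cast this

lemma betaFn_symm (p q : ℝ) : betaFn p q = betaFn q p := by
  unfold betaFn; rw [mul_comm, add_comm]

lemma realBeta_integrableOn {p q : ℝ} (hp : 0 < p) (hq : 0 < q) :
    IntegrableOn (fun t : ℝ => t ^ (p-1) * (1-t) ^ (q-1)) (Set.Ioo 0 1) := by
  have h := (Complex.betaIntegral_convergent (u := (p:ℂ)) (v := (q:ℂ))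
    (by simpa using hp) (by simpa using hq)).1
  have h2 : IntegrableOn (fun x : ℝ => ((x:ℂ) ^ ((p:ℂ) - 1) * (1 - (x:ℂ)) ^ ((q:ℂ) - 1)).re)
      (Set.Ioo 0 1) := IntegrableOn.mono_set h.re Set.Ioo_subset_Ioc_self
  apply h2.congr_fun ?_ measurableSet_Ioo
  intro y hy
  simp only
  rw [show ((p:ℂ)-1) = ((p-1:ℝ):ℂ) by push_cast; ring,
      show ((q:ℂ)-1) = ((q-1:ℝ):ℂ) by push_cast; ring,
      show ((1:ℂ) - (y:ℂ)) = ((1-y:ℝ):ℂ) by push_cast; ring,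
      ← Complex.ofReal_cpow hy.1.le, ← Complex.ofReal_cpow (by linarith [hy.2] : (0:ℝ) ≤ 1 - y)]
  simp

lemma studentP1 (n t : ℝ) (hn : 0 < n) (ht : 0 < t) :
    |(-(2*n*t/(n+t^2)^2))| * ((n/(n+t^2))^(n/2-1:ℝ) * (1 - n/(n+t^2))^((1:ℝ)/2-1))
    = (2/Real.sqrt n) * (1+t^2/n)^(-(n+1)/2:ℝ) := by
  have hA : (0:ℝ) < n + t^2 := by positivity
  rw [abs_neg, abs_of_pos (by positivity)]
  rw [show (1:ℝ) - n/(n+t^2) = t^2/(n+t^2) by field_simp; ring,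
      show (1:ℝ) + t^2/n = (n+t^2)/n by field_simp]
  rw [Real.div_rpow hn.le hA.le, Real.div_rpow (sq_nonneg t) hA.le, Real.div_rpow hA.le hn.le,
      show ((t:ℝ)^2)^((1:ℝ)/2-1) = t⁻¹ by
        rw [← Real.rpow_natCast t 2, ← Real.rpow_mul ht.le,
            show ((2:ℕ):ℝ) * ((1:ℝ)/2-1) = -1 by norm_num]
        exact Real.rpow_neg_one t,
      Real.sqrt_eq_rpow,
      show ((n+t^2):ℝ)^(2:ℕ) = (n+t^2)^((2:ℕ):ℝ) from (Real.rpow_natCast _ 2).symm]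
  have hApow : ∀ y : ℝ, (0:ℝ) < (n+t^2) ^ y := fun y => Real.rpow_pos_of_pos hA y
  have hnpow : ∀ y : ℝ, (0:ℝ) < n ^ y := fun y => Real.rpow_pos_of_pos hn y
  have e1 : ((n+t^2):ℝ)^(-(n+1)/2 : ℝ)
      = ((n+t^2)^(((2:ℕ):ℝ)) * (n+t^2)^(n/2-1:ℝ) * (n+t^2)^((1:ℝ)/2-1))⁻¹ := by
    rw [← Real.rpow_add hA, ← Real.rpow_add hA, ← Real.rpow_neg hA.le]
    ring_nf
  have e2 : (n:ℝ)^(n/2:ℝ) = (n^((1:ℝ)/2) * n^(-(n+1)/2 : ℝ))⁻¹ := by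
    rw [← Real.rpow_add hn, ← Real.rpow_neg hn.le]
    ring_nf
  have e3 : (n:ℝ) * n^(n/2-1:ℝ) = n^(n/2:ℝ) := by
    nth_rewrite 1 [← Real.rpow_one n]
    rw [← Real.rpow_add hn]
    ring_nf
  have key : 2*n*t/(n+t^2)^(((2:ℕ):ℝ)) * (n^(n/2-1:ℝ)/(n+t^2)^(n/2-1:ℝ) * (t⁻¹/(n+t^2)^((1:ℝ)/2-1)))
      = 2 * (n:ℝ)^(n/2:ℝ) * (n+t^2)^(-(n+1)/2 : ℝ) := by
    rw [e1, ← e3]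
    field_simp
  rw [key, e2]
  field_simp

section Student
variable {n : ℝ}

lemma hasDeriv_f (hn : 0 < n) : ∀ t ∈ Set.Ioi (0:ℝ),
    HasDerivWithinAt (fun t : ℝ => n/(n+t^2)) (-(2*n*t/(n+t^2)^2)) (Set.Ioi 0) t := by
  intro t _
  have hA : (0:ℝ) < n + t^2 := by positivity
  have h1 : HasDerivAt (fun t : ℝ => n + t^2) (2*t) t := by
    simpa using (hasDerivAt_pow 2 t).const_add n
  have h2 := (hasDerivAt_const t n).div h1 hA.ne'
  have h3 : HasDerivAt (fun t : ℝ => n/(n+t^2)) ((0 * (n + t ^ 2) - n * (2 * t)) / (n + t ^ 2) ^ 2) t := h2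
  exact h3.hasDerivWithinAt.congr_deriv (by ring)

lemma inj_f (hn : 0 < n) : Set.InjOn (fun t : ℝ => n/(n+t^2)) (Set.Ioi 0) := by
  intro a ha b hb h
  simp only at h
  have hA : (0:ℝ) < n + a^2 := by positivity
  have hB : (0:ℝ) < n + b^2 := by positivity
  rw [div_eq_div_iff hA.ne' hB.ne'] at h
  have h2 : a^2 = b^2 := by
    have := mul_left_cancel₀ hn.ne' h
    linarith
  have h3 : (a - b) * (a + b) = 0 := by linear_combination h2
  rcases mul_eq_zero.mp h3 with h4 | h4
  · linarith
  · have := Set.mem_Ioi.mp ha; have := Set.mem_Ioi.mp hb; linarith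

lemma img_f (hn : 0 < n) : (fun t : ℝ => n/(n+t^2)) '' (Set.Ioi 0) = Set.Ioo 0 1 := by
  ext u; constructor
  · rintro ⟨t, ht, rfl⟩
    have ht' := Set.mem_Ioi.mp ht
    have hA : (0:ℝ) < n + t^2 := by positivity
    refine ⟨by positivity, ?_⟩
    rw [div_lt_one hA]
    nlinarith
  · rintro ⟨hu0, hu1⟩
    have hpos : 0 < n*(1-u)/u := div_pos (mul_pos hn (by linarith)) hu0
    refine ⟨Real.sqrt (n*(1-u)/u), Set.mem_Ioi.mpr (Real.sqrt_pos.mpr hpos), ?_⟩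
    simp only
    rw [Real.sq_sqrt hpos.le]
    rw [show n + n*(1-u)/u = n/u by field_simp; ring]
    rw [div_div_eq_mul_div]
    field_simp

lemma integral_Ioi_student (hn : 0 < n) :
    ∫ t in Set.Ioi (0:ℝ), (1+t^2/n)^(-(n+1)/2:ℝ)
      = Real.sqrt n / 2 * betaFn (1/2) (n/2) := by
  have key := integral_image_eq_integral_abs_deriv_smul measurableSet_Ioi
    (hasDeriv_f hn) (inj_f hn) (fun u : ℝ => u^(n/2-1:ℝ)*(1-u)^((1:ℝ)/2-1))
  rw [img_f hn] at key
  have hL : ∫ u in Set.Ioo (0:ℝ) 1, u^(n/2-1:ℝ)*(1-u)^((1:ℝ)/2-1) = betaFn (n/2) (1/2) := by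
    rw [← realBeta (by positivity) (by norm_num : (0:ℝ) < 1/2),
        intervalIntegral.integral_of_le (by norm_num : (0:ℝ) ≤ 1),
        MeasureTheory.integral_Ioc_eq_integral_Ioo]
  have hR : (∫ t in Set.Ioi (0:ℝ),
        |(-(2*n*t/(n+t^2)^2))| • ((n/(n+t^2))^(n/2-1:ℝ)*(1-n/(n+t^2))^((1:ℝ)/2-1)))
      = (2/Real.sqrt n) * ∫ t in Set.Ioi (0:ℝ), (1+t^2/n)^(-(n+1)/2:ℝ) := by
    rw [← MeasureTheory.integral_const_mul]
    apply setIntegral_congr_fun measurableSet_Ioi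
    intro t ht
    simp only [smul_eq_mul]
    exact studentP1 n t hn (Set.mem_Ioi.mp ht)
  rw [hL, hR] at key
  have hs : (0:ℝ) < Real.sqrt n := Real.sqrt_pos.mpr hn
  rw [betaFn_symm]
  field_simp at key ⊢
  linarith

lemma integrableOn_Ioi_student (hn : 0 < n) :
    IntegrableOn (fun t : ℝ => (1+t^2/n)^(-(n+1)/2:ℝ)) (Set.Ioi 0) := by
  have hiff := integrableOn_image_iff_integrableOn_abs_deriv_smul measurableSet_Ioi
    (hasDeriv_f hn) (inj_f hn) (fun u : ℝ => u^(n/2-1:ℝ)*(1-u)^((1:ℝ)/2-1))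
  rw [img_f hn] at hiff
  have h2 := hiff.mp (realBeta_integrableOn (by positivity) (by norm_num : (0:ℝ) < 1/2))
  have hs : (0:ℝ) < Real.sqrt n := Real.sqrt_pos.mpr hn
  refine IntegrableOn.congr_fun
    (Integrable.const_mul h2 (Real.sqrt n / 2) : IntegrableOn _ _ _) ?_ measurableSet_Ioi
  intro t ht
  simp only [smul_eq_mul]
  rw [studentP1 n t hn (Set.mem_Ioi.mp ht)]
  field_simp

lemma integrable_student (hn : 0 < n) :
    Integrable (fun t : ℝ => (1+t^2/n)^(-(n+1)/2:ℝ)) := by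
  have h1 := integrableOn_Ioi_student hn
  have hd : ∀ t ∈ Set.Ioi (0:ℝ), HasDerivWithinAt (fun t : ℝ => -t) (-1) (Set.Ioi 0) t :=
    fun t _ => (hasDerivAt_neg t).hasDerivWithinAt
  have hi : Set.InjOn (fun t : ℝ => -t) (Set.Ioi 0) := neg_injective.injOn
  have him : (fun t : ℝ => -t) '' Set.Ioi 0 = Set.Iio 0 := by
    ext u
    simp only [Set.mem_image, Set.mem_Ioi, Set.mem_Iio]
    constructor
    · rintro ⟨t, ht, rfl⟩; linarith
    · intro hu; exact ⟨-u, by linarith, by ring⟩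
  have h2 : IntegrableOn (fun t : ℝ => (1+t^2/n)^(-(n+1)/2:ℝ)) (Set.Iio 0) := by
    rw [← him, integrableOn_image_iff_integrableOn_abs_deriv_smul measurableSet_Ioi hd hi]
    apply h1.congr_fun ?_ measurableSet_Ioi
    intro t _
    simp
  have h3 : IntegrableOn (fun t : ℝ => (1+t^2/n)^(-(n+1)/2:ℝ)) ({(0:ℝ)}ᶜ) := by
    rw [show ({(0:ℝ)}ᶜ : Set ℝ) = Set.Iio 0 ∪ Set.Ioi 0 from (Set.Iio_union_Ioi).symm]
    exact h2.union h1
  have h4 : (volume : Measure ℝ).restrict ({(0:ℝ)}ᶜ) = volume :=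
    Measure.restrict_eq_self_of_ae_mem (by
      refine MeasureTheory.ae_iff.mpr ?_
      simp)
  exact h4 ▸ h3

lemma integral_Iic_student (hn : 0 < n) :
    ∫ t in Set.Iic (0:ℝ), (1+t^2/n)^(-(n+1)/2:ℝ)
      = ∫ t in Set.Ioi (0:ℝ), (1+t^2/n)^(-(n+1)/2:ℝ) := by
  have := integral_comp_neg_Iic (0:ℝ) (fun t : ℝ => (1+t^2/n)^(-(n+1)/2:ℝ))
  simp only [neg_sq, neg_zero] at this
  exact this

end Student

lemma betaFn_half_one : betaFn (1/2) 1 = 2 := by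
  unfold betaFn
  rw [Real.Gamma_one, Real.Gamma_add_one (by norm_num : (1/2:ℝ) ≠ 0)]
  have h := Real.Gamma_pos_of_pos (show (0:ℝ) < 1/2 by norm_num)
  field_simp

lemma subst_sq (e z : ℝ) :
    ∫ t in Set.Ioo (0:ℝ) 1, t^((1:ℝ)/2-1) * (1 - z*t)^e
      = 2 * ∫ s in Set.Ioo (0:ℝ) 1, (1 - z*s^2)^e := by
  have hd : ∀ s ∈ Set.Ioo (0:ℝ) 1, HasDerivWithinAt (fun s : ℝ => s^2) (2*s) (Set.Ioo 0 1) s := by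
    intro s _
    simpa using (hasDerivAt_pow 2 s).hasDerivWithinAt
  have hi : Set.InjOn (fun s : ℝ => s^2) (Set.Ioo 0 1) := by
    intro a ha b hb h
    simp only at h
    have h3 : (a - b) * (a + b) = 0 := by linear_combination h
    rcases mul_eq_zero.mp h3 with h4 | h4
    · linarith
    · have := ha.1; have := hb.1; linarith
  have him : (fun s : ℝ => s^2) '' Set.Ioo 0 1 = Set.Ioo 0 1 := by
    ext u
    simp only [Set.mem_image, Set.mem_Ioo]
    constructor
    · rintro ⟨s, ⟨h0, h1⟩, rfl⟩
      exact ⟨by positivity, by nlinarith⟩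
    · rintro ⟨h0, h1⟩
      refine ⟨Real.sqrt u, ⟨Real.sqrt_pos.mpr h0, ?_⟩, Real.sq_sqrt h0.le⟩
      nlinarith [Real.sq_sqrt h0.le, Real.sqrt_nonneg u]
  have key := integral_image_eq_integral_abs_deriv_smul measurableSet_Ioo hd hi
    (fun t : ℝ => t^((1:ℝ)/2-1) * (1 - z*t)^e)
  rw [him] at key
  rw [key, ← MeasureTheory.integral_const_mul]
  apply setIntegral_congr_fun measurableSet_Ioo
  intro s hs
  obtain ⟨h0, _⟩ := hs
  simp only [smul_eq_mul]
  rw [abs_of_pos (by positivity),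
      show ((s:ℝ)^2)^((1:ℝ)/2-1) = s⁻¹ by
        rw [← Real.rpow_natCast s 2, ← Real.rpow_mul h0.le,
            show ((2:ℕ):ℝ) * ((1:ℝ)/2-1) = -1 by norm_num]
        exact Real.rpow_neg_one s]
  field_simp

lemma step_scale (n : ℝ) (hn : 0 < n) (e x : ℝ) :
    x * ∫ s in (0:ℝ)..1, (1 + x^2*s^2/n)^e = ∫ u in (0:ℝ)..x, (1+u^2/n)^e := by
  rcases eq_or_ne x 0 with rfl | hx
  · simp
  · have h := intervalIntegral.integral_comp_mul_left (a := (0:ℝ)) (b := 1)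
      (f := fun u : ℝ => (1+u^2/n)^e) hx
    simp only [mul_zero, mul_one] at h
    rw [show (fun s : ℝ => (1 + x^2*s^2/n)^e) = (fun s : ℝ => (1+(x*s)^2/n)^e) by
          funext s; rw [mul_pow],
        h, smul_eq_mul, ← mul_assoc, mul_inv_cancel₀ hx, one_mul]

lemma hyp_eval (n : ℝ) (hn : 0 < n) (x : ℝ) :
    hyp2F1 (1/2) ((n+1)/2) (3/2) (-(x^2)/n)
      = ∫ s in (0:ℝ)..1, (1 + x^2*s^2/n)^(-(n+1)/2 : ℝ) := by
  unfold hyp2F1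
  rw [show (3/2 - 1/2 : ℝ) = 1 by norm_num, betaFn_half_one]
  have h1 : ∀ t : ℝ, t ^ (1/2-1 : ℝ) * (1-t) ^ (1-1 : ℝ) * (1 - (-(x^2)/n)*t) ^ (-((n+1)/2) : ℝ)
      = t ^ ((1:ℝ)/2-1) * (1 - (-(x^2)/n)*t) ^ (-((n+1)/2) : ℝ) := by
    intro t
    norm_num
  rw [intervalIntegral.integral_congr (fun t _ => h1 t),
      intervalIntegral.integral_of_le (by norm_num : (0:ℝ) ≤ 1),
      MeasureTheory.integral_Ioc_eq_integral_Ioo,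
      subst_sq (-((n+1)/2)) (-(x^2)/n),
      intervalIntegral.integral_of_le (by norm_num : (0:ℝ) ≤ 1),
      MeasureTheory.integral_Ioc_eq_integral_Ioo]
  rw [show (∫ s in Set.Ioo (0:ℝ) 1, (1 - (-(x^2)/n)*s^2) ^ (-((n+1)/2) : ℝ))
      = ∫ s in Set.Ioo (0:ℝ) 1, (1 + x^2*s^2/n) ^ (-(n+1)/2 : ℝ) by
    apply setIntegral_congr_fun measurableSet_Ioo
    intro s _
    simp only
    rw [show (1 - (-(x^2)/n)*s^2 : ℝ) = 1 + x^2*s^2/n by field_simp; ring,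
        show (-((n+1)/2) : ℝ) = (-(n+1)/2 : ℝ) by ring]]
  ring

/-- `F_n(x) = 1/2 + (x/(√n B(1/2,n/2))) ₂F₁(1/2,(n+1)/2;3/2;-x²/n)` for all real `x`. -/
theorem studentCDF_eq_hyp2F1 (n : ℝ) (hn : 0 < n) (x : ℝ) :
    studentCDF n x
      = 1/2 + (x / (Real.sqrt n * betaFn (1/2) (n/2))) *
          hyp2F1 (1/2) ((n+1)/2) (3/2) (-(x^2) / n) := by
  have hB : 0 < betaFn (1/2) (n/2) := betaFn_pos (by norm_num) (by positivity)
  have hs : (0:ℝ) < Real.sqrt n := Real.sqrt_pos.mpr hn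
  have hint := integrable_student hn
  unfold studentCDF studentDensity
  rw [MeasureTheory.integral_const_mul]
  have split : (∫ t in Set.Iic x, (1+t^2/n)^(-(n+1)/2:ℝ))
      = (∫ t in Set.Iic (0:ℝ), (1+t^2/n)^(-(n+1)/2:ℝ))
        + ∫ t in (0:ℝ)..x, (1+t^2/n)^(-(n+1)/2:ℝ) := by
    have h := intervalIntegral.integral_Iic_sub_Iic (hint.integrableOn) (hint.integrableOn)
      (μ := volume) (a := (0:ℝ)) (b := x)
    linarith
  rw [split, integral_Iic_student hn, integral_Ioi_student hn,
      ← step_scale n hn (-(n+1)/2 : ℝ) x, hyp_eval n hn x]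
  set I := ∫ s in (0:ℝ)..1, (1 + x^2*s^2/n)^(-(n+1)/2 : ℝ) with hI
  field_simp
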